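/- For every real ν ≥ 1 and every real z > 0, one has K_ν(z) > e^{−z}·√(π/(e·z))·(2(ν − 1/2)/(e·z))^{ν − 1/2}. -/

import Mathlib

/-!
Since `cosh t = 1 + 2 sinh² (t/2)` and, for `ν ≥ 1`,
`cosh (ν t) ≥ (2 sinh (t/2)) ^ (2ν - 1) cosh (t/2)`, the substitution `u = sinh (t/2)` bounds the
Bessel integral below by a Gaussian moment: `K_ν(z) ≥ e^{-z} 2^{ν-1} Γ(ν) / z^ν`. It remains to
show `Γ(ν) > √(2π/e) ((ν - 1/2)/e) ^ (ν - 1/2)`. For `a ≤ x ≤ q`, convexity of `log Γ` bounds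
`log Γ x` below by the line through `(q, log Γ q)` of slope `log q`, while the logarithm of the
right-hand side is convex in `x`; so it suffices to compare at `x = a` and `x = q`. The anchors
`q = 3/2`, `2` and `⌊ν⌋ + 1` do it, the last one via Stirling's lower bound for `n!`.
-/

open Real MeasureTheory

/-- Modified Bessel function of the second kind, via its integral representation. -/
noncomputable def besselK (ν z : ℝ) : ℝ :=
  ∫ t in Set.Ioi (0 : ℝ), Real.exp (-z * Real.cosh t) * Real.cosh (ν * t)

open Set
open scoped Nat

theorem log_le_log_add_sub_div {x y : ℝ} (hx : 0 < x) (hy : 0 < y) :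
    log x ≤ log y + (x - y) / y := by
  have h := log_le_sub_one_of_pos (div_pos hx hy)
  rw [log_div hx.ne' hy.ne'] at h
  rw [sub_div, div_self hy.ne']
  linarith

theorem convexOn_mul_add {s : Set ℝ} (hs : Convex ℝ s) (a b : ℝ) :
    ConvexOn ℝ s fun x => a * x + b :=
  ⟨hs, fun x _ y _ s t _ _ hst => le_of_eq (by
    simp only [smul_eq_mul]; linear_combination (-b) * hst)⟩

theorem log_Gamma_sub_mul_log_le {x q : ℝ} (hx : 0 < x) (hxq : x ≤ q) :
    log (Gamma q) - (q - x) * log q ≤ log (Gamma x) := by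
  rcases hxq.eq_or_lt with rfl | hlt
  · simp
  have hq : 0 < q := hx.trans hlt
  have h := convexOn_log_Gamma.slope_mono_adjacent (mem_Ioi.mpr hx)
    (mem_Ioi.mpr (by linarith : 0 < q + 1)) hlt (lt_add_one q)
  simp only [Function.comp, Gamma_add_one hq.ne', log_mul hq.ne' (Gamma_pos_of_pos hq).ne',
    add_sub_cancel_left, div_one] at h
  rw [div_le_iff₀ (sub_pos.mpr hlt)] at h
  linarith

/-- The logarithm of `√(2π/e) ((x - 1/2)/e) ^ (x - 1/2)`. -/
noncomputable def logGammaMinorant (x : ℝ) : ℝ :=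
  (log (2 * π) - 1) / 2 + (x - 1 / 2) * (log (x - 1 / 2) - 1)

theorem convexOn_logGammaMinorant : ConvexOn ℝ (Ici (1 / 2)) logGammaMinorant := by
  have h := (convexOn_mul_log.translate_right (-(1 / 2))).add
    (convexOn_mul_add ((convex_Ici 0).translate_preimage_right (-(1 / 2))) (-1)
      ((log (2 * π) - 1) / 2 + 1 / 2))
  have hs : (fun x : ℝ => -(1 / 2) + x) ⁻¹' Ici 0 = Ici (1 / 2) := by
    ext x
    simp only [mem_preimage, mem_Ici]
    constructor <;> intro h <;> linarith
  rw [hs] at h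
  refine h.congr fun x _ => ?_
  simp only [logGammaMinorant, Pi.add_apply, Function.comp]
  ring_nf

theorem logGammaMinorant_lt_log_Gamma_of_endpoints {a q x : ℝ} (ha : 1 / 2 ≤ a) (hax : a ≤ x)
    (hxq : x ≤ q) (h_a : logGammaMinorant a + (q - a) * log q < log (Gamma q))
    (h_q : logGammaMinorant q < log (Gamma q)) :
    logGammaMinorant x < log (Gamma x) := by
  have hconv : ConvexOn ℝ (Ici (1 / 2)) fun y => logGammaMinorant y + (q - y) * log q := by
    refine (convexOn_logGammaMinorant.add
      (convexOn_mul_add (convex_Ici _) (-log q) (q * log q))).congr fun y _ => ?_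
    simp only [Pi.add_apply]
    ring
  have hchord := hconv.le_on_segment ha (ha.trans (hax.trans hxq))
    (by rw [segment_eq_Icc (hax.trans hxq)]; exact ⟨hax, hxq⟩)
  simp only [sub_self, zero_mul, add_zero] at hchord
  linarith [max_lt h_a h_q, log_Gamma_sub_mul_log_le (by linarith) hxq]

theorem logGammaMinorant_add_log_lt_log_factorial {n : ℕ} (hn : 2 ≤ n) :
    logGammaMinorant n + log (n + 1) < log n ! := by
  have hS := Stirling.le_log_factorial_stirling (n := n) (by omega)
  suffices (n - 1 / 2 : ℝ) * log (n - 1 / 2) + log (n + 1) < n * log n + log n / 2 by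
    unfold logGammaMinorant
    rw [log_mul two_ne_zero pi_ne_zero] at hS ⊢
    linarith
  rcases hn.eq_or_lt with rfl | hn3
  · have h := log_lt_log (by norm_num) (by norm_num : (3 : ℝ) ^ 5 < 2 ^ 8)
    rw [log_pow, log_pow] at h
    norm_num [log_div] at h ⊢
    linarith
  · -- tangent-line bounds for `log` at `n` leave a margin of `1/2 - 5/(4n)`
    have hn3 : (3 : ℝ) ≤ n := by exact_mod_cast hn3
    have hn0 : (0 : ℝ) < n := by linarith
    have hlog_succ := log_le_log_add_sub_div (by linarith : (0 : ℝ) < n + 1) hn0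
    have hlog_half := log_le_log_add_sub_div (by linarith : (0 : ℝ) < n - 1 / 2) hn0
    have hmul := mul_le_mul_of_nonneg_left hlog_half (by linarith : (0 : ℝ) ≤ n - 1 / 2)
    have hmul_eq : (n - 1 / 2 : ℝ) * ((n - 1 / 2 - n) / n) = -1 / 2 + 1 / 4 * (1 / n) := by
      field_simp
      ring
    have hsucc_eq : (n + 1 - n : ℝ) / n = 1 / n := by ring
    have hinv : 1 / (n : ℝ) ≤ 1 / 3 := one_div_le_one_div_of_le (by norm_num) hn3
    nlinarith

theorem logGammaMinorant_add_one_lt_log_factorial {n : ℕ} (hn : 1 ≤ n) :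
    logGammaMinorant (n + 1) < log n ! := by
  have h := logGammaMinorant_add_log_lt_log_factorial (n := n + 1) (by omega)
  rw [Nat.factorial_succ, Nat.cast_mul, log_mul (by positivity) (by positivity)] at h
  push_cast at h
  have : log (n + 1 : ℝ) < log (n + 1 + 1) := log_lt_log (by positivity) (by linarith)
  linarith

theorem logGammaMinorant_lt_log_Gamma {x : ℝ} (hx : 1 ≤ x) :
    logGammaMinorant x < log (Gamma x) := by
  have hlog2 := log_two_lt_d9
  have hlogπ : log π < 2 * log 2 := by
    rw [← log_rpow two_pos]
    exact log_lt_log pi_pos (by norm_num; exact pi_lt_four)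
  have hlog32 := log_le_log_add_sub_div (by norm_num : (0 : ℝ) < 3 / 2) one_pos
  norm_num at hlog32
  have hΓ32 : log (Gamma (3 / 2)) = log π / 2 - log 2 := by
    rw [show (3 / 2 : ℝ) = 1 / 2 + 1 by norm_num, Gamma_add_one (by norm_num), Gamma_one_half_eq,
      log_mul (by norm_num) (by positivity), log_sqrt pi_pos.le, one_div, log_inv]
    ring
  rcases le_or_gt x (3 / 2) with hx32 | hx32
  · have hlog12 : log (1 / 2 : ℝ) = -log 2 := by rw [one_div, log_inv]
    refine logGammaMinorant_lt_log_Gamma_of_endpoints (a := 1) (by norm_num) hx hx32 ?_ ?_ <;>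
      norm_num [logGammaMinorant, hΓ32, hlog12, log_mul two_ne_zero pi_ne_zero] <;> linarith
  rcases le_or_gt x 2 with hx2 | hx2
  · have hr2 := logGammaMinorant_add_one_lt_log_factorial (n := 1) le_rfl
    norm_num at hr2
    refine logGammaMinorant_lt_log_Gamma_of_endpoints (a := 3 / 2) (by norm_num) hx32.le hx2 ?_ ?_
    · norm_num [logGammaMinorant, log_mul two_ne_zero pi_ne_zero]
      linarith
    · simpa using hr2
  · set n := ⌊x⌋₊
    have hn : 2 ≤ n := Nat.le_floor (by exact_mod_cast hx2.le)
    have hn' : (2 : ℝ) ≤ n := by exact_mod_cast hn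
    refine logGammaMinorant_lt_log_Gamma_of_endpoints (a := n) (q := n + 1) (by linarith)
      (Nat.floor_le (by linarith)) (Nat.lt_floor_add_one x).le ?_ ?_ <;>
      rw [Gamma_nat_eq_factorial]
    · simpa using logGammaMinorant_add_log_lt_log_factorial hn
    · exact logGammaMinorant_add_one_lt_log_factorial (by omega)

theorem cosh_eq_one_add_two_mul_sinh_half_sq (x : ℝ) : cosh x = 1 + 2 * sinh (x / 2) ^ 2 := by
  have h := cosh_two_mul (x / 2)
  rw [mul_div_cancel₀ x two_ne_zero, cosh_sq'] at h
  linarith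

theorem one_add_sq_div_two_le_cosh (x : ℝ) : 1 + x ^ 2 / 2 ≤ cosh x := by
  have h : |x| / 2 ≤ sinh (|x| / 2) := self_le_sinh_iff.mpr (by positivity)
  rw [← cosh_abs, cosh_eq_one_add_two_mul_sinh_half_sq, ← sq_abs x]
  nlinarith [mul_self_le_mul_self (by positivity) h]

theorem cosh_le_exp_abs (x : ℝ) : cosh x ≤ exp |x| := by
  rw [cosh_eq]
  linarith [exp_le_exp.mpr (le_abs_self x), exp_le_exp.mpr (neg_le_abs x)]

theorem one_sub_rpow_mul_one_add_le_one {b p : ℝ} (hb0 : 0 ≤ b) (hb1 : b ≤ 1) (hp : 1 ≤ p) :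
    (1 - b) ^ p * (1 + b) ≤ 1 := by
  have h := rpow_le_rpow_of_exponent_ge' (sub_nonneg.mpr hb1) (by linarith) zero_le_one hp
  rw [rpow_one] at h
  nlinarith

theorem two_mul_sinh_half_rpow_mul_cosh_half_le_cosh {ν t : ℝ} (hν : 1 ≤ ν) (ht : 0 ≤ t) :
    (2 * sinh (t / 2)) ^ (2 * ν - 1) * cosh (t / 2) ≤ cosh (ν * t) := by
  have hb1 : exp (-t) ≤ 1 := exp_le_one_iff.mpr (by linarith)
  have hs : 2 * sinh (t / 2) = exp (t / 2) * (1 - exp (-t)) := by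
    rw [sinh_eq, mul_sub, ← exp_add]
    ring_nf
  have hc : cosh (t / 2) = exp (t / 2) * (1 + exp (-t)) / 2 := by
    rw [cosh_eq, mul_add, ← exp_add]
    ring_nf
  have he : exp (ν * t) = exp (t / 2 * (2 * ν - 1)) * exp (t / 2) := by
    rw [← exp_add]
    ring_nf
  calc (2 * sinh (t / 2)) ^ (2 * ν - 1) * cosh (t / 2)
      = exp (ν * t) / 2 * ((1 - exp (-t)) ^ (2 * ν - 1) * (1 + exp (-t))) := by
        rw [hs, hc, mul_rpow (exp_pos _).le (sub_nonneg.mpr hb1), ← exp_mul, he]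
        ring
    _ ≤ exp (ν * t) / 2 :=
        mul_le_of_le_one_right (by positivity)
          (one_sub_rpow_mul_one_add_le_one (exp_pos _).le hb1 (by linarith))
    _ ≤ cosh (ν * t) := by
        rw [cosh_eq]
        linarith [exp_pos (-(ν * t))]

theorem sinh_div_image_Ioi_zero {c : ℝ} (hc : 0 < c) :
    (fun t => sinh (t / c)) '' Ioi 0 = Ioi 0 := by
  ext u
  simp only [mem_image, mem_Ioi]
  constructor
  · rintro ⟨t, ht, rfl⟩
    exact sinh_pos_iff.mpr (div_pos ht hc)
  · intro hu
    exact ⟨c * arsinh u, mul_pos hc (arsinh_pos_iff.mpr hu),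
      by rw [mul_div_cancel_left₀ _ hc.ne', sinh_arsinh]⟩

theorem integral_comp_sinh_div_mul_cosh_div {c : ℝ} (hc : 0 < c) (g : ℝ → ℝ) :
    ∫ t in Ioi 0, g (sinh (t / c)) * cosh (t / c) = c * ∫ u in Ioi 0, g u := by
  have hderiv : ∀ t ∈ Ioi (0 : ℝ),
      HasDerivWithinAt (fun t => sinh (t / c)) (cosh (t / c) * (1 / c)) (Ioi 0) t :=
    fun t _ => ((hasDerivAt_sinh _).comp t ((hasDerivAt_id t).div_const c)).hasDerivWithinAt
  have hinj : InjOn (fun t => sinh (t / c)) (Ioi 0) := fun x _ y _ hxy =>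
    (div_left_inj' hc.ne').mp (sinh_injective hxy)
  have h := integral_image_eq_integral_abs_deriv_smul measurableSet_Ioi hderiv hinj g
  rw [sinh_div_image_Ioi_zero hc] at h
  rw [h, ← integral_const_mul]
  refine setIntegral_congr_fun measurableSet_Ioi fun t _ => ?_
  rw [abs_of_pos (by positivity), smul_eq_mul]
  field_simp

theorem integrableOn_besselK_integrand (ν : ℝ) {z : ℝ} (hz : 0 < z) :
    IntegrableOn (fun t => exp (-z * cosh t) * cosh (ν * t)) (Ioi 0) := by
  set C := (|ν| + 1) ^ 2 / (2 * z)
  refine ((exp_neg_integrableOn_Ioi 0 one_pos).const_mul (exp C)).mono'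
    (by fun_prop : Continuous fun t => exp (-z * cosh t) * cosh (ν * t)).aestronglyMeasurable ?_
  filter_upwards [ae_restrict_mem measurableSet_Ioi] with t (ht : 0 < t)
  have hquad : (|ν| + 1) * t - z * t ^ 2 / 2 ≤ C := by
    rw [le_div_iff₀ (by positivity)]
    nlinarith [sq_nonneg (z * t - (|ν| + 1))]
  have hcosh := one_add_sq_div_two_le_cosh t
  rw [norm_of_nonneg (by positivity), ← exp_add]
  calc exp (-z * cosh t) * cosh (ν * t) ≤ exp (-z * cosh t) * exp (|ν| * t) := by
        gcongr
        simpa [abs_mul, abs_of_pos ht] using cosh_le_exp_abs (ν * t)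
    _ ≤ exp (C + -1 * t) := by
        rw [← exp_add, exp_le_exp]
        nlinarith

theorem exp_neg_mul_two_rpow_mul_Gamma_div_rpow_le_besselK {ν z : ℝ} (hν : 1 ≤ ν) (hz : 0 < z) :
    exp (-z) * 2 ^ (ν - 1) * Gamma ν / z ^ ν ≤ besselK ν z := by
  set g : ℝ → ℝ := fun u => (2 * u) ^ (2 * ν - 1) * exp (-(2 * z) * u ^ 2)
  have h_integral : ∫ u in Ioi 0, g u = 2 ^ (ν - 1) * Gamma ν / z ^ ν / 2 := by
    have h_eq : ∀ u ∈ Ioi (0 : ℝ),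
        g u = 2 ^ (2 * ν - 1) * (u ^ (2 * ν - 1) * exp (-(2 * z) * u ^ (2 : ℝ))) := fun u hu => by
      simp only [g, mul_rpow two_pos.le (le_of_lt hu), rpow_two]
      ring
    have two_rpow : (2 : ℝ) ^ (2 * ν - 1) * 2 ^ (-ν) = 2 ^ (ν - 1) := by
      rw [← rpow_add two_pos]
      ring_nf
    rw [setIntegral_congr_fun measurableSet_Ioi h_eq, integral_const_mul,
      integral_rpow_mul_exp_neg_mul_rpow two_pos (by linarith) (by positivity),
      show (2 * ν - 1 + 1) / 2 = ν by ring, show -(2 * ν - 1 + 1) / 2 = -ν by ring,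
      mul_rpow two_pos.le hz.le, ← two_rpow, rpow_neg hz.le]
    ring
  calc exp (-z) * 2 ^ (ν - 1) * Gamma ν / z ^ ν
      = ∫ t in Ioi 0, exp (-z) * (g (sinh (t / 2)) * cosh (t / 2)) := by
        rw [integral_const_mul, integral_comp_sinh_div_mul_cosh_div two_pos, h_integral]
        ring
    _ ≤ besselK ν z := by
        refine integral_mono_of_nonneg ?_ (integrableOn_besselK_integrand ν hz) ?_ <;>
          filter_upwards [ae_restrict_mem measurableSet_Ioi] with t (ht : 0 < t)
        · have hs : 0 < sinh (t / 2) := sinh_pos_iff.mpr (by positivity)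
          positivity
        · have hexp : exp (-z) * exp (-(2 * z) * sinh (t / 2) ^ 2) = exp (-z * cosh t) := by
            rw [← exp_add, cosh_eq_one_add_two_mul_sinh_half_sq]
            ring_nf
          calc exp (-z) * (g (sinh (t / 2)) * cosh (t / 2))
              = exp (-z * cosh t) * ((2 * sinh (t / 2)) ^ (2 * ν - 1) * cosh (t / 2)) := by
                rw [← hexp]
                simp only [g]
                ring
            _ ≤ exp (-z * cosh t) * cosh (ν * t) := by
                gcongr
                exact two_mul_sinh_half_rpow_mul_cosh_half_le_cosh hν ht.le

theorem besselK_lower_bound (ν z : ℝ) (hν : 1 ≤ ν) (hz : 0 < z) :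
    besselK ν z >
      Real.exp (-z) * Real.sqrt (π / (Real.exp 1 * z)) *
        (2 * (ν - 1 / 2) / (Real.exp 1 * z)) ^ (ν - 1 / 2) := by
  have hy : 0 < ν - 1 / 2 := by linarith
  have hbase : 0 < 2 * (ν - 1 / 2) / (exp 1 * z) := by positivity
  have hpow := rpow_pos_of_pos hbase (ν - 1 / 2)
  have hΓ := Gamma_pos_of_pos (by linarith : 0 < ν)
  have hlhs : log (exp (-z) * √(π / (exp 1 * z)) * (2 * (ν - 1 / 2) / (exp 1 * z)) ^ (ν - 1 / 2))
      = logGammaMinorant ν + (ν - 1) * log 2 - ν * log z - z := by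
    rw [log_mul (by positivity) hpow.ne', log_mul (by positivity) (by positivity), log_exp,
      log_sqrt (by positivity), log_rpow hbase, log_div (by positivity) (by positivity),
      log_div (by positivity) (by positivity), log_mul (by positivity) hz.ne', log_exp,
      log_mul two_ne_zero hy.ne', logGammaMinorant, log_mul two_ne_zero pi_ne_zero]
    ring
  have hrhs : log (exp (-z) * 2 ^ (ν - 1) * Gamma ν / z ^ ν)
      = log (Gamma ν) + (ν - 1) * log 2 - ν * log z - z := by
    rw [log_div (by positivity) (by positivity), log_mul (by positivity) hΓ.ne',
      log_mul (by positivity) (by positivity), log_exp, log_rpow two_pos, log_rpow hz]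
    ring
  refine lt_of_lt_of_le ?_ (exp_neg_mul_two_rpow_mul_Gamma_div_rpow_le_besselK hν hz)
  rw [← log_lt_log_iff (by positivity) (by positivity), hlhs, hrhs]
  linarith [logGammaMinorant_lt_log_Gamma hν]
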